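/- arXiv:1710.11579 — 2 statements merged into one kernel-verified Lean document; each statement's English description precedes it below -/
import Mathlib

section
/- Let n ≥ 1 and let λ_1 ≥ λ_2 ≥ … ≥ λ_n ≥ 0 be integers. Let x(λ) ∈ 𝓘𝓜_0 be the sequence (2−2λ_1, 4−2λ_2, …, 2n−2λ_n, 2(n+1), 2(n+2), …). Then S̄_n(x(λ)) = x(λ∪1ⁿ), where λ∪1ⁿ = (λ_1+1, …, λ_n+1); explicitly, t_{2i+1}(x(λ)) = 0 for all i < −λ_1, and τ^{−1}( Σ_{i=−λ_1}^{n} (−1)^i t_{2i+1}(x(λ)) ) = (2−2(λ_1+1), 4−2(λ_2+1), …, 2n−2(λ_n+1), 2(n+1), 2(n+2), …). -/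
/-- The defining property of the set `𝓘𝓜`: strictly increasing sequences of even
integers which eventually satisfy `x_i = 2i + 2k` for some charge `k ∈ ℤ`. -/
def IMprop (x : ℕ → ℤ) : Prop :=
  StrictMono x ∧ (∀ i, Even (x i)) ∧
    ∃ k : ℤ, ∃ N : ℕ, ∀ i : ℕ, N ≤ i → x i = 2 * ((i : ℤ) + 1) + 2 * k

/-- The set `𝓘𝓜` of basis sequences (`0`-based indexing: entry `i` is `x_{i+1}`). -/
def IM : Type := {x : ℕ → ℤ // IMprop x}

/-- The fermionic Fock space `V_F`, the free abelian group on the basis `𝓘𝓜`. -/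
abbrev VF : Type := IM →₀ ℤ

lemma IM.exists_ge (x : IM) (m : ℤ) : ∃ N : ℕ, m ≤ x.1 N := by
  obtain ⟨-, -, k, N, hN⟩ := x.2
  refine ⟨N + (m - x.1 N).toNat, ?_⟩
  have h1 := hN N le_rfl
  have h2 := hN (N + (m - x.1 N).toNat) (Nat.le_add_right _ _)
  have h3 : (m - x.1 N) ≤ ((m - x.1 N).toNat : ℤ) := Int.self_le_toNat _
  have h4 : (0 : ℤ) ≤ ((m - x.1 N).toNat : ℤ) := Int.natCast_nonneg _
  push_cast at h2
  omega

/-- The position where `2j` is to be inserted into (or found in) `x`: the least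
index `N` with `2j ≤ x N`, i.e. the number of entries of `x` smaller than `2j`. -/
def posIdx (j : ℤ) (x : IM) : ℕ := Nat.find (IM.exists_ge x (2 * j))

lemma posIdx_le (j : ℤ) (x : IM) : 2 * j ≤ x.1 (posIdx j x) :=
  Nat.find_spec (IM.exists_ge x (2 * j))

lemma posIdx_lt (j : ℤ) (x : IM) : ∀ i, i < posIdx j x → x.1 i < 2 * j := by
  intro i hi
  have := Nat.find_min (IM.exists_ge x (2 * j)) hi
  omega

/-- Insertion of a value `a` into a sequence at position `p`. -/
def insSeq (x : ℕ → ℤ) (p : ℕ) (a : ℤ) : ℕ → ℤ :=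
  fun i => if i < p then x i else if i = p then a else x (i - 1)

/-- Deletion of the entry at position `p` of a sequence. -/
def delSeq (x : ℕ → ℤ) (p : ℕ) : ℕ → ℤ :=
  fun i => if i < p then x i else x (i + 1)

lemma insSeq_mem (x : ℕ → ℤ) (hx : IMprop x) (p : ℕ) (a : ℤ) (ha : Even a)
    (hlow : ∀ i, i < p → x i < a) (hhigh : a < x p) :
    IMprop (insSeq x p a) := by
  obtain ⟨hm, he, k, N, hN⟩ := hx
  refine ⟨strictMono_nat_of_lt_succ ?_, ?_, k - 1, max N p + 1, ?_⟩
  · intro i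
    by_cases h1 : i + 1 < p
    · have hi : i < p := by omega
      simp only [insSeq, if_pos hi, if_pos h1]
      exact hm (Nat.lt_succ_self i)
    · by_cases h2 : i + 1 = p
      · have hi : i < p := by omega
        simp only [insSeq, if_pos hi, if_neg h1, if_pos h2]
        exact hlow i hi
      · by_cases h3 : i = p
        · have hnl : ¬ i < p := by omega
          simp only [insSeq, if_neg hnl, if_pos h3, if_neg h1, if_neg h2]
          have e1 : i + 1 - 1 = i := by omega
          rw [e1, h3]
          exact hhigh
        · have hnl : ¬ i < p := by omega
          simp only [insSeq, if_neg hnl, if_neg h3, if_neg h1, if_neg h2]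
          have e1 : i + 1 - 1 = i := by omega
          rw [e1]
          exact hm (by omega : i - 1 < i)
  · intro i
    by_cases h1 : i < p
    · simpa [insSeq, if_pos h1] using he i
    · by_cases h2 : i = p
      · simpa [insSeq, h1, h2] using ha
      · simpa [insSeq, h1, h2] using he (i - 1)
  · intro i hi
    have h1 : ¬ i < p := by omega
    have h2 : ¬ i = p := by omega
    simp only [insSeq, if_neg h1, if_neg h2]
    rw [hN (i - 1) (by omega)]
    rw [Nat.cast_sub (by omega : 1 ≤ i)]
    push_cast
    ring

lemma delSeq_mem (x : ℕ → ℤ) (hx : IMprop x) (p : ℕ) : IMprop (delSeq x p) := by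
  obtain ⟨hm, he, k, N, hN⟩ := hx
  refine ⟨strictMono_nat_of_lt_succ ?_, ?_, k + 1, max N p, ?_⟩
  · intro i
    by_cases h1 : i + 1 < p
    · simp only [delSeq, if_pos (by omega : i < p), if_pos h1]
      exact hm (Nat.lt_succ_self i)
    · by_cases h2 : i < p
      · simp only [delSeq, if_pos h2, if_neg h1]
        exact hm (by omega : i < i + 1 + 1)
      · simp only [delSeq, if_neg h2, if_neg h1]
        exact hm (by omega : i + 1 < i + 1 + 1)
  · intro i
    by_cases h1 : i < p
    · simpa [delSeq, h1] using he i
    · simpa [delSeq, h1] using he (i + 1)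
  · intro i hi
    simp only [delSeq, if_neg (by omega : ¬ i < p)]
    rw [hN (i + 1) (by omega)]
    push_cast
    ring

/-- The creating operator `ψ_j` on a basis element: zero if `2j` occurs in `x`,
and otherwise `(−1)^n` times the basis element obtained by inserting `2j`,
where `n` is the number of entries of `x` smaller than `2j`. -/
noncomputable def psiB (j : ℤ) (x : IM) : VF :=
  if h : x.1 (posIdx j x) = 2 * j then 0
  else ((-1 : ℤ) ^ (posIdx j x)) •
    Finsupp.single (⟨insSeq x.1 (posIdx j x) (2 * j),
      insSeq_mem x.1 x.2 (posIdx j x) (2 * j) (even_two_mul j) (posIdx_lt j x)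
        (lt_of_le_of_ne (posIdx_le j x) (fun hh => h hh.symm))⟩ : IM) 1

/-- The annihilating operator `ψ_j^*` on a basis element: zero if `2j` does not
occur in `x`, and otherwise `(−1)^{n−1}` times the basis element obtained by
deleting the entry `x_n = 2j`. -/
noncomputable def psiStarB (j : ℤ) (x : IM) : VF :=
  if _ : x.1 (posIdx j x) = 2 * j then
    ((-1 : ℤ) ^ (posIdx j x)) •
      Finsupp.single (⟨delSeq x.1 (posIdx j x), delSeq_mem x.1 x.2 (posIdx j x)⟩ : IM) 1
  else 0

/-- The creating operator `ψ_j : V_F → V_F`. -/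
noncomputable def psiOp (j : ℤ) : VF →ₗ[ℤ] VF := Finsupp.lift VF ℤ IM (psiB j)

/-- The annihilating operator `ψ_j^* : V_F → V_F`. -/
noncomputable def psiStarOp (j : ℤ) : VF →ₗ[ℤ] VF := Finsupp.lift VF ℤ IM (psiStarB j)

/-- The Clifford operators: `t_{2j} = ψ_j` and `t_{2j−1} = ψ_j^* + ψ_{j−1}^*`. -/
noncomputable def tOp (m : ℤ) : VF →ₗ[ℤ] VF :=
  if m % 2 = 0 then psiOp (m / 2)
  else psiStarOp ((m + 1) / 2) + psiStarOp ((m + 1) / 2 - 1)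

/-- `msign i = (−1)^i` for an integer `i`. -/
def msign (i : ℤ) : ℤ := if Even i then 1 else -1

/-- The translation `x ↦ (x_1+2, x_2+2, …)` on basis sequences. -/
def shiftUpIM (x : IM) : IM :=
  ⟨fun i => x.1 i + 2, by
    obtain ⟨hm, he, k, N, hN⟩ := x.2
    exact ⟨fun a b hab => by simpa using hm hab,
      fun i => (he i).add even_two,
      k + 1, N, fun i hi => by
        show x.1 i + 2 = 2 * ((i : ℤ) + 1) + 2 * (k + 1)
        rw [hN i hi]; ring⟩⟩

/-- The translation `x ↦ (x_1−2, x_2−2, …)` on basis sequences. -/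
def shiftDownIM (x : IM) : IM :=
  ⟨fun i => x.1 i - 2, by
    obtain ⟨hm, he, k, N, hN⟩ := x.2
    exact ⟨fun a b hab => by simpa using hm hab,
      fun i => (he i).sub even_two,
      k - 1, N, fun i hi => by
        show x.1 i - 2 = 2 * ((i : ℤ) + 1) + 2 * (k - 1)
        rw [hN i hi]; ring⟩⟩

/-- The translation isomorphism `τ : V_F → V_F`. -/
noncomputable def tauPlus : VF →ₗ[ℤ] VF := Finsupp.lmapDomain ℤ ℤ shiftUpIM

/-- The inverse translation `τ⁻¹ : V_F → V_F`. -/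
noncomputable def tauMinus : VF →ₗ[ℤ] VF := Finsupp.lmapDomain ℤ ℤ shiftDownIM

/-- The charge-`k` part `(V_F)_k` of the Fock space: the span of the basis
sequences of charge `k`. -/
noncomputable def VFk (k : ℤ) : Submodule ℤ VF :=
  Finsupp.supported ℤ ℤ
    {x : IM | ∃ N : ℕ, ∀ i : ℕ, N ≤ i → x.1 i = 2 * ((i : ℤ) + 1) + 2 * k}

/-!
Since `t_{2i+1} = ψ_{i+1}^* + ψ_i^*`, the alternating sum `Σ_{i=a}^{n} (−1)^i t_{2i+1}` telescopes
to `(−1)^a ψ_a^* − (−1)^{n+1} ψ_{n+1}^*`. On `x(λ)` the first term vanishes, because `2a = −2λ_1`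
lies below `x_1 ≥ 2 − 2λ_1`, and `ψ_{n+1}^*` deletes the entry `x_{n+1} = 2(n+1)`
with sign `(−1)^n`. Shifting the remaining sequence down by `2` lowers each of the first `n`
entries by `2` and restores the tail `2(n+1), 2(n+2), …`, which is `x(λ∪1ⁿ)`.
-/

lemma Int.sum_Icc_sub_add_one {M : Type*} [AddCommGroup M] (G : ℤ → M) {a b : ℤ} (hab : a ≤ b) :
    ∑ i ∈ Finset.Icc a b, (G i - G (i + 1)) = G a - G (b + 1) := by
  induction b, hab using Int.leInduction with
  | base => simp
  | succ b hb ih =>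
    rw [← Finset.insert_Icc_right_eq_Icc_add_one (by omega), Finset.sum_insert (by simp), ih]
    abel

lemma finsum_ite_le_eq_sum_Icc {M : Type*} [AddCommMonoid M] (f : ℤ → M) {a : ℤ}
    (hf : ∀ i < a, f i = 0) (b : ℤ) :
    ∑ᶠ i : ℤ, (if i ≤ b then f i else 0) = ∑ i ∈ Finset.Icc a b, f i := by
  have hsupp : Function.support (fun i : ℤ => if i ≤ b then f i else 0) ⊆ Finset.Icc a b := by
    intro i hi
    simp only [Function.mem_support, ne_eq, ite_eq_right_iff, not_forall] at hi
    obtain ⟨hib, hfi⟩ := hi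
    simp only [Finset.coe_Icc, Set.mem_Icc]
    exact ⟨not_lt.mp fun hia => hfi (hf i hia), hib⟩
  rw [finsum_eq_finsetSum_of_support_subset _ hsupp]
  exact Finset.sum_congr rfl fun i hi => if_pos (Finset.mem_Icc.mp hi).2

lemma msign_add_one (i : ℤ) : msign (i + 1) = -msign i := by
  by_cases h : Even i <;> simp [msign, h]

lemma msign_natCast (n : ℕ) : msign n = (-1) ^ n := by
  induction n with
  | zero => simp [msign]
  | succ k ih => rw [Nat.cast_succ, msign_add_one, ih, pow_succ, mul_neg_one]

def IM.delete (x : IM) (p : ℕ) : IM := ⟨delSeq x.1 p, delSeq_mem x.1 x.2 p⟩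

lemma posIdx_eq_of_apply_eq {j : ℤ} {x : IM} {p : ℕ} (hp : x.1 p = 2 * j) : posIdx j x = p := by
  refine le_antisymm (Nat.find_le hp.ge) (not_lt.mp fun hlt => ?_)
  have := x.2.1 hlt
  have := posIdx_le j x
  omega

lemma psiStarOp_single_of_apply_eq {j : ℤ} {x : IM} {p : ℕ} (hp : x.1 p = 2 * j) :
    psiStarOp j (Finsupp.single x 1) =
      (-1) ^ p • Finsupp.single (x.delete p) 1 := by
  obtain rfl := posIdx_eq_of_apply_eq hp
  rw [psiStarOp, Finsupp.lift_apply, Finsupp.sum_single_index (by simp), one_smul, psiStarB,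
    dif_pos hp]
  rfl

lemma psiStarOp_single_of_lt {j : ℤ} {x : IM} (hj : 2 * j < x.1 0) :
    psiStarOp j (Finsupp.single x 1) = 0 := by
  have hne : x.1 (posIdx j x) ≠ 2 * j :=
    (hj.trans_le (x.2.1.monotone (Nat.zero_le _))).ne'
  simp [psiStarOp, psiStarB, hne]

lemma tOp_two_mul_add_one (i : ℤ) : tOp (2 * i + 1) = psiStarOp (i + 1) + psiStarOp i := by
  have hodd : ¬ (2 * i + 1) % 2 = 0 := by omega
  have hhalf : (2 * i + 1 + 1) / 2 = i + 1 := by omega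
  rw [tOp, if_neg hodd, hhalf, add_sub_cancel_right]

lemma tOp_two_mul_add_one_single_of_lt {i : ℤ} {x : IM} (hi : 2 * (i + 1) < x.1 0) :
    tOp (2 * i + 1) (Finsupp.single x 1) = 0 := by
  rw [tOp_two_mul_add_one, LinearMap.add_apply, psiStarOp_single_of_lt hi,
    psiStarOp_single_of_lt (by omega), add_zero]

lemma msign_smul_tOp_two_mul_add_one (i : ℤ) (v : VF) :
    msign i • tOp (2 * i + 1) v =
      msign i • psiStarOp i v - msign (i + 1) • psiStarOp (i + 1) v := by
  rw [tOp_two_mul_add_one, LinearMap.add_apply, msign_add_one, smul_add, neg_smul]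
  abel

lemma sum_msign_smul_tOp_two_mul_add_one (v : VF) {a b : ℤ} (hab : a ≤ b) :
    ∑ i ∈ Finset.Icc a b, msign i • tOp (2 * i + 1) v =
      msign a • psiStarOp a v - msign (b + 1) • psiStarOp (b + 1) v := by
  simp only [msign_smul_tOp_two_mul_add_one]
  exact Int.sum_Icc_sub_add_one (fun i => msign i • psiStarOp i v) hab

lemma sum_msign_smul_tOp_single {x : IM} {a : ℤ} {n : ℕ} (ha : 2 * a < x.1 0)
    (hn : x.1 n = 2 * ((n : ℤ) + 1)) :
    ∑ i ∈ Finset.Icc a n, msign i • tOp (2 * i + 1) (Finsupp.single x 1) =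
      Finsupp.single (x.delete n) 1 := by
  have hmono : x.1 0 ≤ x.1 n := x.2.1.monotone (Nat.zero_le n)
  have hsign : msign ((n : ℤ) + 1) * (-1) ^ n = -1 := by
    rw [msign_add_one, msign_natCast, neg_mul, ← pow_add, Even.neg_one_pow ⟨n, rfl⟩]
  rw [sum_msign_smul_tOp_two_mul_add_one _ (by omega), psiStarOp_single_of_lt ha,
    psiStarOp_single_of_apply_eq hn, smul_smul, hsign]
  simp

lemma tauMinus_single (x : IM) (c : ℤ) :
    tauMinus (Finsupp.single x c) = Finsupp.single (shiftDownIM x) c :=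
  Finsupp.mapDomain_single

theorem Sbar_on_basis_general (n : ℕ) (lam : ℕ → ℕ)
    (x y : IM)
    (hx : ∀ i, i < n → x.1 i = 2 * ((i : ℤ) + 1) - 2 * (lam i : ℤ))
    (hx' : ∀ i, n ≤ i → x.1 i = 2 * ((i : ℤ) + 1))
    (hy : ∀ i, i < n → y.1 i = 2 * ((i : ℤ) + 1) - 2 * ((lam i : ℤ) + 1))
    (hy' : ∀ i, n ≤ i → y.1 i = 2 * ((i : ℤ) + 1)) :
    (∀ i : ℤ, i < -(lam 0 : ℤ) → tOp (2 * i + 1) (Finsupp.single x 1) = 0) ∧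
    tauMinus (∑ i ∈ Finset.Icc (-(lam 0 : ℤ)) (n : ℤ),
        msign i • tOp (2 * i + 1) (Finsupp.single x 1)) = Finsupp.single y 1 ∧
    tauMinus (∑ᶠ i : ℤ,
        if i ≤ (n : ℤ) then msign i • tOp (2 * i + 1) (Finsupp.single x 1) else 0) =
      Finsupp.single y 1 := by
  have hx0 : 2 - 2 * (lam 0 : ℤ) ≤ x.1 0 := by
    rcases Nat.eq_zero_or_pos n with rfl | hn
    · rw [hx' 0 le_rfl]; omega
    · rw [hx 0 hn]; simp
  have hvanish : ∀ i : ℤ, i < -(lam 0 : ℤ) → tOp (2 * i + 1) (Finsupp.single x 1) = 0 :=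
    fun i hi => tOp_two_mul_add_one_single_of_lt (by omega)
  have hshift : shiftDownIM (x.delete n) = y := by
    refine Subtype.ext (funext fun i => ?_)
    change delSeq x.1 n i - 2 = y.1 i
    by_cases hi : i < n
    · rw [delSeq, if_pos hi, hx i hi, hy i hi]; ring
    · rw [delSeq, if_neg hi, hx' (i + 1) (by omega), hy' i (by omega)]; push_cast; ring
  have hsum : tauMinus (∑ i ∈ Finset.Icc (-(lam 0 : ℤ)) (n : ℤ),
      msign i • tOp (2 * i + 1) (Finsupp.single x 1)) = Finsupp.single y 1 := by
    rw [sum_msign_smul_tOp_single (by omega) (hx' n le_rfl), tauMinus_single, hshift]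
  refine ⟨hvanish, hsum, ?_⟩
  rwa [finsum_ite_le_eq_sum_Icc _ fun i hi => by rw [hvanish i hi, smul_zero]]

/-- Theorem 6.5 computation: for `n ≥ 1` and integers `λ_1 ≥ … ≥ λ_n ≥ 0`, with
`x(λ) = (2−2λ_1, 4−2λ_2, …, 2n−2λ_n, 2(n+1), …) ∈ 𝓘𝓜_0` and
`λ∪1ⁿ = (λ_1+1, …, λ_n+1)`, one has `S̄_n(x(λ)) = x(λ∪1ⁿ)`; explicitly,
`t_{2i+1}(x(λ)) = 0` for all `i < −λ_1`, and
`τ⁻¹(Σ_{i=−λ_1}^{n} (−1)^i t_{2i+1}(x(λ))) = x(λ∪1ⁿ)`. -/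
theorem Sbar_on_basis (n : ℕ) (hn : 1 ≤ n) (lam : ℕ → ℕ)
    (hdec : ∀ i, i + 1 < n → lam (i + 1) ≤ lam i)
    (x y : IM)
    (hx : ∀ i, i < n → x.1 i = 2 * ((i : ℤ) + 1) - 2 * (lam i : ℤ))
    (hx' : ∀ i, n ≤ i → x.1 i = 2 * ((i : ℤ) + 1))
    (hy : ∀ i, i < n → y.1 i = 2 * ((i : ℤ) + 1) - 2 * ((lam i : ℤ) + 1))
    (hy' : ∀ i, n ≤ i → y.1 i = 2 * ((i : ℤ) + 1)) :
    (∀ i : ℤ, i < -(lam 0 : ℤ) → tOp (2 * i + 1) (Finsupp.single x 1) = 0) ∧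
    tauMinus (∑ i ∈ Finset.Icc (-(lam 0 : ℤ)) (n : ℤ),
        msign i • tOp (2 * i + 1) (Finsupp.single x 1)) = Finsupp.single y 1 ∧
    tauMinus (∑ᶠ i : ℤ,
        if i ≤ (n : ℤ) then msign i • tOp (2 * i + 1) (Finsupp.single x 1) else 0) =
      Finsupp.single y 1 :=
  Sbar_on_basis_general n lam x y hx hx' hy hy'
end

section
/- Let n ≥ 1 and let λ be a partition with at most n parts, written λ = (λ_1 ≥ … ≥ λ_n ≥ 0), with the convention λ_{n+1} = 0. For 0 ≤ t ≤ n define the partition λ^t = (λ_1+1, …, λ_{n−t}+1, λ_{n−t+2}, …, λ_n, 0) (so λ^0 = (λ_1+1, …, λ_n+1) and λ^n = (λ_2, …, λ_n, 0)). Then S_n(𝔵(λ)) = Σ_{t=0}^{n} (−1)^{t+n} 𝔵(λ^t); moreover, among the vectors t_{2s}(𝔵(λ)) with integer s ≥ −n, exactly those with s = λ_{n−t+1} − (n−t) for some t ∈ {0,…,n} are nonzero. -/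
/-- The partition `λ^t = (λ_1+1, …, λ_{n−t}+1, λ_{n−t+2}, …, λ_n, 0)`
(0-based indexing). -/
def lamT (n : ℕ) (lam : ℕ → ℕ) (t : ℕ) : ℕ → ℕ :=
  fun i => if i < n - t then lam i + 1 else if i + 1 < n then lam (i + 1) else 0

/-- The conjugate partition: `conjC N a i = #{j < N : a_j ≥ i+1}`
(counting within the first `N` rows). -/
def conjC (N : ℕ) (a : ℕ → ℕ) (i : ℕ) : ℕ :=
  ((Finset.range N).filter (fun j => i + 1 ≤ a j)).card


/-
Write `λ̄_{i+1} = conjC n lam i`. Conjugation is a Galois connection: `u < λ̄_{i+1} ↔ i < λ_{u+1}`.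
It follows that the halved entries `i + 1 - λ̄_{i+1}` of `𝔵(λ)` are exactly the integers that are
not of the form `λ_{u+1} - u`, and that `λ_{u+1} - u` lies strictly between the entries of
positions `λ_{u+1} - 1` and `λ_{u+1}`. So `t_{2s} = ψ_s` kills `𝔵(λ)` when `2s` is an entry, and
otherwise `s = λ_{u+1} - u` for a unique `u` (unique since `u ↦ λ_{u+1} - u` is strictly
decreasing; `s ≥ -n` forces `u ≤ n`) and `ψ_s` inserts `2s` at position `λ_{u+1}` with sign
`(-1)^{λ_{u+1}}`. The same Galois connection, applied to `λ^{n-u}`, shows that shifting the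
result by `τ` gives `𝔵(λ^{n-u})`; reindexing `t = n - u` and collecting signs gives `S_n(𝔵(λ))`.
-/

open Finset

/-- The sequence `𝔵(ν)` of the paper, `0`-based, with `ν̄` computed from the first `n` parts. -/
def mayaSeq (n : ℕ) (ν : ℕ → ℕ) (i : ℕ) : ℤ :=
  2 * ((i : ℤ) + 1) - 2 * (conjC n ν i : ℤ)

section Conjugate

variable {n : ℕ} {ν : ℕ → ℕ}

theorem lt_conjC_iff (hν : Antitone ν) (hsupp : ∀ j, n ≤ j → ν j = 0) {u i : ℕ} :
    u < conjC n ν i ↔ i < ν u := by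
  unfold conjC
  constructor
  · intro h
    by_contra hiu
    have hsub : (range n).filter (fun j => i + 1 ≤ ν j) ⊆ range u := by
      intro j hj
      simp only [mem_filter, mem_range] at hj ⊢
      by_contra hju
      have := hν (not_lt.1 hju)
      omega
    have := card_le_card hsub
    rw [card_range] at this
    omega
  · intro hiu
    have hun : u < n := by
      by_contra hun
      have := hsupp u (not_lt.1 hun)
      omega
    have hsub : range (u + 1) ⊆ (range n).filter (fun j => i + 1 ≤ ν j) := by
      intro j hj
      simp only [mem_filter, mem_range] at hj ⊢
      have := hν (Nat.lt_succ_iff.1 hj)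
      omega
    simpa using card_le_card hsub

theorem mayaSeq_lt_of_lt (hν : Antitone ν) (hsupp : ∀ j, n ≤ j → ν j = 0) {u k : ℕ}
    (hk : k < ν u) : mayaSeq n ν k < 2 * ((ν u : ℤ) - u) := by
  have := (lt_conjC_iff hν hsupp).2 hk
  unfold mayaSeq
  omega

theorem lt_mayaSeq_self (hν : Antitone ν) (hsupp : ∀ j, n ≤ j → ν j = 0) (u : ℕ) :
    2 * ((ν u : ℤ) - u) < mayaSeq n ν (ν u) := by
  have : conjC n ν (ν u) ≤ u := not_lt.1 fun h => lt_irrefl _ ((lt_conjC_iff hν hsupp).1 h)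
  unfold mayaSeq
  omega

theorem exists_mayaSeq_eq (hν : Antitone ν) (hsupp : ∀ j, n ≤ j → ν j = 0) {s : ℤ}
    (hs : -(n : ℤ) ≤ s) (hgap : ∀ u ≤ n, s ≠ (ν u : ℤ) - u) :
    ∃ i, mayaSeq n ν i = 2 * s := by
  have hn : (ν n : ℤ) < s + n := by
    have := hgap n le_rfl
    rw [hsupp n le_rfl] at this ⊢
    omega
  have hex : ∃ u : ℕ, (ν u : ℤ) < s + u := ⟨n, hn⟩
  -- `2s` is the entry at position `s + u₀ - 1`, for the first `u₀` with `ν u₀ - u₀ < s`.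
  set u₀ := Nat.find hex
  have hu₀ : (ν u₀ : ℤ) < s + u₀ := Nat.find_spec hex
  have hu₀n : u₀ ≤ n := Nat.find_le hn
  have hbelow : ∀ j < u₀, s + j < ν j := fun j hj => by
    have := Nat.find_min hex hj
    have := hgap j (by omega)
    omega
  refine ⟨(s + u₀ - 1).toNat, ?_⟩
  have hi : ((s + u₀ - 1).toNat : ℤ) = s + u₀ - 1 := Int.toNat_of_nonneg (by omega)
  have hconj : conjC n ν (s + u₀ - 1).toNat = u₀ := by
    refine eq_of_forall_lt_iff fun v => ?_
    rw [lt_conjC_iff hν hsupp]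
    constructor
    · intro hv
      by_contra hvu
      have := hν (not_lt.1 hvu)
      omega
    · intro hv
      have := hbelow (u₀ - 1) (by omega)
      have := hν (show v ≤ u₀ - 1 by omega)
      omega
  unfold mayaSeq
  rw [hconj, hi]
  ring

end Conjugate

section LamT

variable {n u : ℕ} {lam : ℕ → ℕ}

theorem lamT_sub_apply (hsupp : ∀ j, n ≤ j → lam j = 0) (hu : u ≤ n) (w : ℕ) :
    lamT n lam (n - u) w = if w < u then lam w + 1 else lam (w + 1) := by
  simp only [lamT, Nat.sub_sub_self hu]
  split_ifs <;> first | rfl | exact (hsupp _ (by omega)).symm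

theorem lamT_eq_zero_of_le {t : ℕ} : ∀ j, n ≤ j → lamT n lam t j = 0 := by
  intro j hj
  simp only [lamT]
  split_ifs <;> omega

theorem antitone_lamT_sub (hlam : Antitone lam) (hsupp : ∀ j, n ≤ j → lam j = 0) (hu : u ≤ n) :
    Antitone (lamT n lam (n - u)) := by
  refine antitone_nat_of_succ_le fun w => ?_
  simp only [lamT_sub_apply hsupp hu]
  have := hlam (show w ≤ w + 1 by omega)
  have := hlam (show w + 1 ≤ w + 1 + 1 by omega)
  split_ifs <;> omega

theorem conjC_lamT_sub_add_one_of_lt (hlam : Antitone lam) (hsupp : ∀ j, n ≤ j → lam j = 0)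
    (hu : u ≤ n) {i : ℕ} (hi : i < lam u) :
    conjC n (lamT n lam (n - u)) i + 1 = conjC n lam i := by
  refine eq_of_forall_lt_iff fun v => ?_
  rw [lt_conjC_iff hlam hsupp]
  rcases v with _ | w
  · simp only [Nat.zero_lt_succ, true_iff]
    exact hi.trans_le (hlam (Nat.zero_le u))
  · rw [Nat.succ_lt_succ_iff, lt_conjC_iff (antitone_lamT_sub hlam hsupp hu) lamT_eq_zero_of_le,
      lamT_sub_apply hsupp hu]
    split_ifs with hw
    · have := hlam hw.le
      have := hlam (show w + 1 ≤ u from hw)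
      omega
    · rfl

theorem conjC_lamT_sub_self (hlam : Antitone lam) (hsupp : ∀ j, n ≤ j → lam j = 0)
    (hu : u ≤ n) : conjC n (lamT n lam (n - u)) (lam u) = u := by
  refine eq_of_forall_lt_iff fun v => ?_
  rw [lt_conjC_iff (antitone_lamT_sub hlam hsupp hu) lamT_eq_zero_of_le, lamT_sub_apply hsupp hu]
  split_ifs with hv
  · simpa [hv] using Nat.lt_succ_of_le (hlam hv.le)
  · simpa [hv] using hlam (show u ≤ v + 1 by omega)

theorem conjC_lamT_sub_of_gt (hlam : Antitone lam) (hsupp : ∀ j, n ≤ j → lam j = 0)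
    (hu : u ≤ n) {i : ℕ} (hi : lam u < i) :
    conjC n (lamT n lam (n - u)) i = conjC n lam (i - 1) := by
  refine eq_of_forall_lt_iff fun v => ?_
  rw [lt_conjC_iff (antitone_lamT_sub hlam hsupp hu) lamT_eq_zero_of_le, lamT_sub_apply hsupp hu,
    lt_conjC_iff hlam hsupp]
  split_ifs with hv
  · omega
  · have := hlam (show u ≤ v by omega)
    have := hlam (show u ≤ v + 1 by omega)
    omega

theorem mayaSeq_lamT_sub (hlam : Antitone lam) (hsupp : ∀ j, n ≤ j → lam j = 0)
    (hu : u ≤ n) (i : ℕ) :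
    mayaSeq n (lamT n lam (n - u)) i =
      insSeq (mayaSeq n lam) (lam u) (2 * ((lam u : ℤ) - u)) i + 2 := by
  simp only [insSeq, mayaSeq]
  rcases lt_trichotomy i (lam u) with hi | rfl | hi
  · have := conjC_lamT_sub_add_one_of_lt hlam hsupp hu hi
    rw [if_pos hi]
    omega
  · rw [if_neg (lt_irrefl _), if_pos rfl, conjC_lamT_sub_self hlam hsupp hu]
    ring
  · rw [if_neg (by omega), if_neg (by omega), conjC_lamT_sub_of_gt hlam hsupp hu hi,
      Nat.cast_sub (by omega : 1 ≤ i)]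
    push_cast
    ring

end LamT

section Operators

theorem posIdx_eq {j : ℤ} {x : IM} {i : ℕ} (hlt : ∀ k < i, x.1 k < 2 * j)
    (hle : 2 * j ≤ x.1 i) : posIdx j x = i := by
  rw [posIdx, Nat.find_eq_iff]
  exact ⟨hle, fun k hk => not_le.2 (hlt k hk)⟩

theorem psiB_eq_zero_of_eq {j : ℤ} {x : IM} {i : ℕ} (h : x.1 i = 2 * j) : psiB j x = 0 := by
  have hpos : posIdx j x = i := posIdx_eq (fun k hk => h ▸ x.2.1 hk) h.ge
  rw [psiB, dif_pos (hpos ▸ h)]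

theorem exists_psiB_eq_single {j : ℤ} {x : IM} {i : ℕ} (hlt : ∀ k < i, x.1 k < 2 * j)
    (hgt : 2 * j < x.1 i) :
    ∃ z : IM, z.1 = insSeq x.1 i (2 * j) ∧ psiB j x = Finsupp.single z ((-1) ^ i) := by
  have hpos : posIdx j x = i := posIdx_eq hlt hgt.le
  subst hpos
  rw [psiB, dif_neg hgt.ne']
  exact ⟨_, rfl, Finsupp.smul_single_one _ _⟩

theorem tOp_two_mul_single (s : ℤ) (x : IM) : tOp (2 * s) (Finsupp.single x 1) = psiB s x := by
  rw [tOp, if_pos (Int.mul_emod_right 2 s), Int.mul_ediv_cancel_left s two_ne_zero, psiOp,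
    Finsupp.lift_apply, Finsupp.sum_single_index (by simp), one_smul]

theorem tauPlus_single (y : IM) (c : ℤ) :
    tauPlus (Finsupp.single y c) = Finsupp.single (shiftUpIM y) c := by
  rw [tauPlus, Finsupp.lmapDomain_apply, Finsupp.mapDomain_single]

theorem msign_eq_negOnePow (i : ℤ) : msign i = i.negOnePow := by
  unfold msign
  split_ifs with h
  · rw [Int.negOnePow_even i h, Units.val_one]
  · rw [Int.negOnePow_odd i (Int.not_even_iff_odd.1 h), Units.val_neg, Units.val_one]

theorem msign_sub_mul_neg_one_pow {n u : ℕ} (hu : u ≤ n) (l : ℕ) :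
    msign ((l : ℤ) - u) * (-1) ^ l = msign (((n - u : ℕ) : ℤ) + n) := by
  simp only [msign_eq_negOnePow, ← Int.coe_negOnePow_natCast, ← Units.val_mul,
    ← Int.negOnePow_add]
  congr 1
  rw [Int.negOnePow_eq_iff]
  exact ⟨(l : ℤ) - n, by push_cast [Nat.cast_sub hu]; ring⟩

end Operators

section Basis

variable {n : ℕ} {lam : ℕ → ℕ}

theorem tOp_single_eq_zero (hlam : Antitone lam) (hsupp : ∀ j, n ≤ j → lam j = 0) {x : IM}
    (hx : x.1 = mayaSeq n lam) {s : ℤ} (hs : -(n : ℤ) ≤ s)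
    (hgap : ∀ u ≤ n, s ≠ (lam u : ℤ) - u) : tOp (2 * s) (Finsupp.single x 1) = 0 := by
  obtain ⟨i, hi⟩ := exists_mayaSeq_eq hlam hsupp hs hgap
  rw [tOp_two_mul_single, psiB_eq_zero_of_eq (i := i) (by rw [hx, hi])]

theorem exists_tOp_single_eq (hlam : Antitone lam) (hsupp : ∀ j, n ≤ j → lam j = 0) {x : IM}
    (hx : x.1 = mayaSeq n lam) (u : ℕ) :
    ∃ z : IM, z.1 = insSeq (mayaSeq n lam) (lam u) (2 * ((lam u : ℤ) - u)) ∧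
      tOp (2 * ((lam u : ℤ) - u)) (Finsupp.single x 1) = Finsupp.single z ((-1) ^ lam u) := by
  rw [tOp_two_mul_single, ← hx]
  exact exists_psiB_eq_single (fun k hk => hx ▸ mayaSeq_lt_of_lt hlam hsupp hk)
    (hx ▸ lt_mayaSeq_self hlam hsupp u)

theorem tOp_single_ne_zero_iff (hlam : Antitone lam) (hsupp : ∀ j, n ≤ j → lam j = 0) {x : IM}
    (hx : x.1 = mayaSeq n lam) {s : ℤ} (hs : -(n : ℤ) ≤ s) :
    tOp (2 * s) (Finsupp.single x 1) ≠ 0 ↔ ∃ u : ℕ, u ≤ n ∧ s = (lam u : ℤ) - (u : ℤ) := by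
  refine ⟨fun hne => by_contra fun hgap => hne (tOp_single_eq_zero hlam hsupp hx hs
    fun u hu h => hgap ⟨u, hu, h⟩), ?_⟩
  rintro ⟨u, -, rfl⟩
  obtain ⟨z, -, hz⟩ := exists_tOp_single_eq hlam hsupp hx u
  rw [hz, Ne, Finsupp.single_eq_zero]
  exact pow_ne_zero _ (neg_ne_zero.2 one_ne_zero)

theorem tauPlus_tOp_single (hlam : Antitone lam) (hsupp : ∀ j, n ≤ j → lam j = 0) {u : ℕ}
    (hu : u ≤ n) {x y : IM} (hx : x.1 = mayaSeq n lam)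
    (hy : y.1 = mayaSeq n (lamT n lam (n - u))) :
    tauPlus (tOp (2 * ((lam u : ℤ) - u)) (Finsupp.single x 1)) =
      Finsupp.single y ((-1) ^ lam u) := by
  obtain ⟨z, hz, htz⟩ := exists_tOp_single_eq hlam hsupp hx u
  have hzy : shiftUpIM z = y := by
    refine Subtype.ext (funext fun i => ?_)
    show z.1 i + 2 = y.1 i
    rw [hz, hy, mayaSeq_lamT_sub hlam hsupp hu]
  rw [htz, tauPlus_single, hzy]

end Basis

theorem Sn_on_basis_general (n : ℕ) (lam : ℕ → ℕ)
    (hdec : ∀ i, lam (i + 1) ≤ lam i) (hsupp : ∀ i, n ≤ i → lam i = 0)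
    (x : IM) (xs : ℕ → IM)
    (hx : ∀ i, x.1 i = 2 * ((i : ℤ) + 1) - 2 * (conjC n lam i : ℤ))
    (hxs : ∀ t, t ≤ n → ∀ i,
      (xs t).1 i = 2 * ((i : ℤ) + 1) - 2 * (conjC n (lamT n lam t) i : ℤ)) :
    tauPlus (∑ᶠ s : ℤ,
        if -(n : ℤ) ≤ s then msign s • tOp (2 * s) (Finsupp.single x 1) else 0) =
      ∑ t ∈ Finset.range (n + 1), msign ((t : ℤ) + (n : ℤ)) • Finsupp.single (xs t) 1 ∧
    ∀ s : ℤ, -(n : ℤ) ≤ s →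
      (tOp (2 * s) (Finsupp.single x 1) ≠ 0 ↔ ∃ u : ℕ, u ≤ n ∧ s = (lam u : ℤ) - (u : ℤ)) := by
  have hlam : Antitone lam := antitone_nat_of_succ_le hdec
  have hx' : x.1 = mayaSeq n lam := funext hx
  have hxs' (u : ℕ) : (xs (n - u)).1 = mayaSeq n (lamT n lam (n - u)) :=
    funext (hxs (n - u) (Nat.sub_le n u))
  have hnonzero (s : ℤ) (hs : -(n : ℤ) ≤ s) := tOp_single_ne_zero_iff hlam hsupp hx' hs
  refine ⟨?_, hnonzero⟩
  have hsupport : (Function.support fun s : ℤ =>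
      if -(n : ℤ) ≤ s then msign s • tOp (2 * s) (Finsupp.single x 1) else 0) ⊆
        ((range (n + 1)).image fun u : ℕ => (lam u : ℤ) - u : Finset ℤ) := by
    intro s hs
    rw [Function.mem_support] at hs
    split_ifs at hs with hns
    · obtain ⟨u, hu, rfl⟩ := (hnonzero s hns).1 (right_ne_zero_of_smul hs)
      exact mem_coe.2 (mem_image_of_mem _ (mem_range.2 (Nat.lt_succ_of_le hu)))
    · exact absurd rfl hs
  have hinj : StrictAnti fun u : ℕ => (lam u : ℤ) - u := fun a b hab => by
    have := hlam hab.le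
    dsimp only
    omega
  rw [finsum_eq_finsetSum_of_support_subset _ hsupport, sum_image hinj.injective.injOn, map_sum,
    ← sum_range_reflect (fun t => msign ((t : ℤ) + n) • Finsupp.single (xs t) 1)]
  refine sum_congr rfl fun u hu => ?_
  have hun : u ≤ n := Nat.lt_succ_iff.1 (mem_range.1 hu)
  rw [Nat.add_sub_cancel, if_pos (by omega), map_smul, tauPlus_tOp_single hlam hsupp hun hx'
    (hxs' u), Finsupp.smul_single', Finsupp.smul_single_one, msign_sub_mul_neg_one_pow hun]

/-- Theorem 6.9 computation: for a partition `λ` with at most `n` parts,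
`S_n(𝔵(λ)) = Σ_{t=0}^{n} (−1)^{t+n} 𝔵(λ^t)`, and among the `t_{2s}(𝔵(λ))` with
`s ≥ −n`, exactly those with `s = λ_{n−t+1} − (n−t)` (i.e. `s = λ_{u+1} − u`
for some `0 ≤ u ≤ n`, with 1-based part `λ_{u+1}` read as `lam u`) are nonzero. -/
theorem Sn_on_basis (n : ℕ) (hn : 1 ≤ n) (lam : ℕ → ℕ)
    (hdec : ∀ i, lam (i + 1) ≤ lam i) (hsupp : ∀ i, n ≤ i → lam i = 0)
    (x : IM) (xs : ℕ → IM)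
    (hx : ∀ i, x.1 i = 2 * ((i : ℤ) + 1) - 2 * (conjC n lam i : ℤ))
    (hxs : ∀ t, t ≤ n → ∀ i,
      (xs t).1 i = 2 * ((i : ℤ) + 1) - 2 * (conjC n (lamT n lam t) i : ℤ)) :
    tauPlus (∑ᶠ s : ℤ,
        if -(n : ℤ) ≤ s then msign s • tOp (2 * s) (Finsupp.single x 1) else 0) =
      ∑ t ∈ Finset.range (n + 1), msign ((t : ℤ) + (n : ℤ)) • Finsupp.single (xs t) 1 ∧
    ∀ s : ℤ, -(n : ℤ) ≤ s →
      (tOp (2 * s) (Finsupp.single x 1) ≠ 0 ↔ ∃ u : ℕ, u ≤ n ∧ s = (lam u : ℤ) - (u : ℤ)) :=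
  Sn_on_basis_general n lam hdec hsupp x xs hx hxs
end
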